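/- arXiv:2104.09788 — 2 statements merged into one kernel-verified Lean document; each statement's English description precedes it below -/
import Mathlib

section
/- The areas A_n^L = (r/2)·P_n^L of the inscribed polygons strictly increase, the areas A_n^U = (r/2)·P_n^U of the circumscribed polygons strictly decrease, and sup_n A_n^L = inf_n A_n^U = π·r². -/
open Real Filter Topology

private lemma tendsto_sin_div_self : Tendsto (fun y : ℝ => Real.sin y / y) (𝓝[≠] 0) (𝓝 1) := by
  have h := Real.hasDerivAt_sin 0
  rw [hasDerivAt_iff_tendsto_slope] at h
  simpa [slope_fun_def, div_eq_inv_mul] using h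

private lemma tendsto_tan_div_self : Tendsto (fun y : ℝ => Real.tan y / y) (𝓝[≠] 0) (𝓝 1) := by
  have h := Real.hasDerivAt_tan (x := 0) (by simp)
  rw [hasDerivAt_iff_tendsto_slope] at h
  simpa [slope_fun_def, div_eq_inv_mul] using h

/-- Inscribed polygon areas strictly increase, circumscribed polygon areas strictly
decrease, and `sup A_n^L = inf A_n^U = π r²`. -/
theorem stmt_7 (r : ℝ) (hr : 0 < r) (k : ℕ) (hk : 3 ≤ k)
    (AL AU : ℕ → ℝ)
    (hAL : ∀ n, AL n = 2 ^ n * k * r ^ 2 * Real.sin (π / (2 ^ n * k)) * Real.cos (π / (2 ^ n * k)))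
    (hAU : ∀ n, AU n = 2 ^ n * k * r ^ 2 * Real.tan (π / (2 ^ n * k))) :
    StrictMono AL ∧ StrictAnti AU ∧
      (⨆ n, AL n) = π * r ^ 2 ∧ (⨅ n, AU n) = π * r ^ 2 := by
  have hk3 : (3 : ℝ) ≤ (k : ℝ) := by exact_mod_cast hk
  set θ : ℕ → ℝ := fun n => π / (2 ^ n * k) with hθ
  have hden : ∀ n, (0 : ℝ) < 2 ^ n * k := fun n => by positivity
  have hθpos : ∀ n, 0 < θ n := fun n => div_pos pi_pos (hden n)
  have hALθ : ∀ n, AL n = 2 ^ n * k * r ^ 2 * Real.sin (θ n) * Real.cos (θ n) := hAL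
  have hAUθ : ∀ n, AU n = 2 ^ n * k * r ^ 2 * Real.tan (θ n) := hAU
  have hθle : ∀ n, θ n ≤ π / 3 := by
    intro n
    apply div_le_div_of_nonneg_left pi_pos.le (by norm_num)
    calc (3 : ℝ) ≤ (k : ℝ) := hk3
      _ = 1 * k := (one_mul _).symm
      _ ≤ 2 ^ n * k := by
          apply mul_le_mul_of_nonneg_right _ (by linarith)
          exact one_le_pow₀ (by norm_num)
  have hθlt : ∀ n, θ n < π / 2 := fun n =>
    lt_of_le_of_lt (hθle n) (by linarith [pi_pos])
  have hdouble : ∀ n, θ n = 2 * θ (n + 1) := by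
    intro n
    simp only [hθ]
    rw [pow_succ]
    field_simp
  -- positivity of AL
  have hALpos : ∀ n, 0 < AL n := by
    intro n
    rw [hALθ n]
    have hs : 0 < Real.sin (θ n) := Real.sin_pos_of_pos_of_lt_pi (hθpos n)
      (lt_trans (hθlt n) (by linarith [pi_pos]))
    have hc : 0 < Real.cos (θ n) := Real.cos_pos_of_mem_Ioo
      ⟨by linarith [hθpos n, pi_pos], hθlt n⟩
    have := hden n
    positivity
  -- strict monotonicity of AL
  have hmono : StrictMono AL := by
    apply strictMono_nat_of_lt_succ
    intro n
    have key : AL n = AL (n + 1) * Real.cos (θ n) := by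
      rw [hALθ n, hALθ (n + 1), hdouble n, Real.sin_two_mul, pow_succ]
      ring
    rw [key]
    have hcos1 : Real.cos (θ n) < 1 := by
      have := Real.cos_lt_cos_of_nonneg_of_le_pi (le_refl 0)
        (by linarith [hθlt n, pi_pos] : θ n ≤ π) (hθpos n)
      simpa using this
    calc AL (n + 1) * Real.cos (θ n) < AL (n + 1) * 1 := by
          exact mul_lt_mul_of_pos_left hcos1 (hALpos (n + 1))
      _ = AL (n + 1) := mul_one _
  -- strict antitonicity of AU
  have hanti : StrictAnti AU := by
    apply strictAnti_nat_of_succ_lt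
    intro n
    set s := θ (n + 1) with hs
    have hspos : 0 < s := hθpos (n + 1)
    have hslt : s < π / 4 := by
      have h6 : s ≤ π / 3 / 2 := by
        have := hθle n; rw [hdouble n] at this; linarith
      linarith [pi_pos]
    have htpos : 0 < Real.tan s :=
      Real.tan_pos_of_pos_of_lt_pi_div_two hspos (by linarith [pi_pos])
    have htlt : Real.tan s < 1 := by
      have := Real.tan_lt_tan_of_nonneg_of_lt_pi_div_two hspos.le
        (by linarith [pi_pos] : π / 4 < π / 2) hslt
      rwa [Real.tan_pi_div_four] at this
    have htan2 : Real.tan (θ n) > 2 * Real.tan s := by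
      rw [hdouble n, Real.tan_two_mul]
      rw [gt_iff_lt, lt_div_iff₀ (by nlinarith : (0:ℝ) < 1 - Real.tan s ^ 2)]
      simp only [← hs]
      nlinarith [mul_pos (mul_pos htpos htpos) htpos]
    rw [hAUθ n, hAUθ (n + 1)]
    have hd := hden n
    have h2 : (2 : ℝ) ^ (n + 1) * k * r ^ 2 * Real.tan s
        = 2 ^ n * k * r ^ 2 * (2 * Real.tan s) := by
      rw [pow_succ]; ring
    rw [h2]
    exact mul_lt_mul_of_pos_left htan2 (by positivity)
  -- limits
  have hθ0 : Tendsto θ atTop (𝓝 0) := by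
    have : θ = fun n => (π / k) * (1 / 2 : ℝ) ^ n := by
      funext n
      simp only [hθ]
      rw [div_pow, one_pow, div_mul_div_comm, mul_one, mul_comm ((k:ℝ)) (2 ^ n)]
    rw [this]
    have := tendsto_pow_atTop_nhds_zero_of_lt_one (by norm_num : (0:ℝ) ≤ 1/2)
      (by norm_num : (1/2 : ℝ) < 1)
    simpa using this.const_mul (π / k)
  have hθ0' : Tendsto θ atTop (𝓝[≠] 0) :=
    tendsto_nhdsWithin_of_tendsto_nhds_of_eventually_within _ hθ0
      (Eventually.of_forall fun n => (hθpos n).ne')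
  have hALlim : Tendsto AL atTop (𝓝 (π * r ^ 2)) := by
    have heq : AL = fun n => π * r ^ 2 * (Real.sin (θ n) / θ n * Real.cos (θ n)) := by
      funext n
      rw [hALθ n]
      have h1 : (2:ℝ) ^ n * k = π / θ n := by
        rw [eq_div_iff (hθpos n).ne', hθ]; field_simp
      rw [h1]
      field_simp
    rw [heq]
    have h1 : Tendsto (fun n => Real.sin (θ n) / θ n) atTop (𝓝 1) :=
      tendsto_sin_div_self.comp hθ0'
    have h2 : Tendsto (fun n => Real.cos (θ n)) atTop (𝓝 1) := by
      have := (Real.continuous_cos.tendsto 0).comp hθ0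
      simpa [Function.comp_def] using this
    have := (h1.mul h2).const_mul (π * r ^ 2)
    simpa using this
  have hAUlim : Tendsto AU atTop (𝓝 (π * r ^ 2)) := by
    have heq : AU = fun n => π * r ^ 2 * (Real.tan (θ n) / θ n) := by
      funext n
      rw [hAUθ n]
      have h1 : (2:ℝ) ^ n * k = π / θ n := by
        rw [eq_div_iff (hθpos n).ne', hθ]; field_simp
      rw [h1]
      field_simp
    rw [heq]
    have h1 : Tendsto (fun n => Real.tan (θ n) / θ n) atTop (𝓝 1) :=
      tendsto_tan_div_self.comp hθ0'
    have := h1.const_mul (π * r ^ 2)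
    simpa using this
  refine ⟨hmono, hanti, ?_, ?_⟩
  · exact (isLUB_of_tendsto_atTop hmono.monotone hALlim).ciSup_eq
  · exact (isGLB_of_tendsto_atTop hanti.antitone hAUlim).ciInf_eq
end

section
/- For a convex continuously differentiable function f on [a,b], the arc length of the graph is bounded above by the tangent-measure of the trivial partition: the sum of the lengths of the two tangent segments from (a,f(a)) and (b,f(b)) to the intersection point of the tangent lines at a and b (assuming the tangent lines intersect at a point with abscissa in (a,b)). -/
/-- Convexity of `t ↦ √(1+t²)` spelled out. -/
lemma sqrt_one_add_sq_comb (A B α β t : ℝ) (hα : 0 ≤ α) (hβ : 0 ≤ β)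
    (hs : α + β = 1) (ht : t = α * A + β * B) :
    Real.sqrt (1 + t ^ 2) ≤ α * Real.sqrt (1 + A ^ 2) + β * Real.sqrt (1 + B ^ 2) := by
  set u := Real.sqrt (1 + A ^ 2) with hu
  set v := Real.sqrt (1 + B ^ 2) with hv
  have hu0 : 0 ≤ u := Real.sqrt_nonneg _
  have hv0 : 0 ≤ v := Real.sqrt_nonneg _
  have hu2 : u ^ 2 = 1 + A ^ 2 := Real.sq_sqrt (by positivity)
  have hv2 : v ^ 2 = 1 + B ^ 2 := Real.sq_sqrt (by positivity)
  have huv : 1 + A * B ≤ u * v := by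
    rcases le_or_gt (1 + A * B) 0 with h | h
    · exact h.trans (by positivity)
    · have : (1 + A * B) ^ 2 ≤ (u * v) ^ 2 := by
        rw [mul_pow, hu2, hv2]; nlinarith [sq_nonneg (A - B)]
      nlinarith [mul_nonneg hu0 hv0]
  subst ht
  have key : 1 + (α * A + β * B) ^ 2 ≤ (α * u + β * v) ^ 2 := by
    have e : (α * u + β * v) ^ 2 = α ^ 2 * u ^ 2 + 2 * (α * β) * (u * v) + β ^ 2 * v ^ 2 := by
      ring
    rw [e, hu2, hv2]
    have h1 : (α + β) ^ 2 = 1 := by rw [hs]; ring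
    nlinarith [mul_nonneg (mul_nonneg hα hβ) (sub_nonneg.2 huv)]
  calc Real.sqrt (1 + (α * A + β * B) ^ 2) ≤ Real.sqrt ((α * u + β * v) ^ 2) :=
        Real.sqrt_le_sqrt key
    _ = α * u + β * v := Real.sqrt_sq (by positivity)

/-- For a convex C¹ function on `[a,b]`, the arc length of the graph is at most the
tangent-measure of the trivial partition: the sum of the lengths of the two tangent
segments to the intersection `(X,Y)` of the tangent lines at `a` and `b`. -/
theorem stmt_13 (a b : ℝ) (hab : a < b) (f f' : ℝ → ℝ)
    (hconv : ConvexOn ℝ (Set.Icc a b) f)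
    (hderiv : ∀ x ∈ Set.Icc a b, HasDerivAt f (f' x) x)
    (hcont : ContinuousOn f' (Set.Icc a b))
    (hne : f' a ≠ f' b)
    (X Y : ℝ) (hX : a < X ∧ X < b)
    (hY1 : Y = f a + f' a * (X - a)) (hY2 : Y = f b + f' b * (X - b)) :
    (∫ x in a..b, Real.sqrt (1 + f' x ^ 2)) ≤
      Real.sqrt ((X - a) ^ 2 + (Y - f a) ^ 2) +
        Real.sqrt ((b - X) ^ 2 + (f b - Y) ^ 2) := by
  obtain ⟨haX, hXb⟩ := hX
  have ha : a ∈ Set.Icc a b := Set.left_mem_Icc.2 hab.le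
  have hb : b ∈ Set.Icc a b := Set.right_mem_Icc.2 hab.le
  -- monotonicity of f' between endpoints
  have hmono : ∀ x ∈ Set.Icc a b, f' a ≤ f' x ∧ f' x ≤ f' b := by
    intro x hx
    constructor
    · rcases eq_or_lt_of_le hx.1 with rfl | h
      · exact le_rfl
      · exact le_trans (hconv.le_slope_of_hasDerivAt ha hx h (hderiv a ha))
          (hconv.slope_le_of_hasDerivAt ha hx h (hderiv x hx))
    · rcases eq_or_lt_of_le hx.2 with rfl | h
      · exact le_rfl
      · exact le_trans (hconv.le_slope_of_hasDerivAt hx hb h (hderiv x hx))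
          (hconv.slope_le_of_hasDerivAt hx hb h (hderiv b hb))
  have hAB : f' a < f' b := lt_of_le_of_ne ((hmono b hb).1) hne
  set d : ℝ := f' b - f' a with hd
  have hd0 : 0 < d := sub_pos.2 hAB
  set A := f' a
  set B := f' b
  set u := Real.sqrt (1 + A ^ 2)
  set v := Real.sqrt (1 + B ^ 2)
  -- FTC
  have hftc : (∫ x in a..b, f' x) = f b - f a := by
    apply intervalIntegral.integral_eq_sub_of_hasDerivAt
    · intro x hx
      exact hderiv x (by rwa [Set.uIcc_of_le hab.le] at hx)
    · exact (hcont.mono (by rw [Set.uIcc_of_le hab.le])).intervalIntegrable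
  -- intersection relation
  have hrel : f b - f a = A * (X - a) + B * (b - X) := by
    rw [hY2] at hY1; ring_nf; ring_nf at hY1; linarith
  -- integrability
  have hint1 : IntervalIntegrable (fun x => Real.sqrt (1 + f' x ^ 2)) MeasureTheory.volume a b := by
    apply ContinuousOn.intervalIntegrable
    apply ContinuousOn.sqrt
    exact (continuousOn_const.add ((hcont.mono (by rw [Set.uIcc_of_le hab.le])).pow 2))
  have hint2 : IntervalIntegrable (fun x => ((B - f' x) / d) * u + ((f' x - A) / d) * v)
      MeasureTheory.volume a b := by
    apply ContinuousOn.intervalIntegrable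
    have h := hcont.mono (show Set.uIcc a b ⊆ Set.Icc a b by rw [Set.uIcc_of_le hab.le])
    fun_prop
  -- pointwise bound
  have hpt : ∀ x ∈ Set.uIcc a b,
      Real.sqrt (1 + f' x ^ 2) ≤ ((B - f' x) / d) * u + ((f' x - A) / d) * v := by
    intro x hx
    rw [Set.uIcc_of_le hab.le] at hx
    obtain ⟨h1, h2⟩ := hmono x hx
    apply sqrt_one_add_sq_comb
    · exact div_nonneg (by linarith) hd0.le
    · exact div_nonneg (by linarith) hd0.le
    · field_simp; linear_combination -hd
    · field_simp; ring
  have hle := intervalIntegral.integral_mono_on hab.le hint1 hint2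
    (fun x hx => hpt x (by rw [Set.uIcc_of_le hab.le]; exact hx))
  -- compute the RHS integral
  have hintf' : IntervalIntegrable f' MeasureTheory.volume a b :=
    (hcont.mono (by rw [Set.uIcc_of_le hab.le])).intervalIntegrable
  have hcalc : (∫ x in a..b, ((B - f' x) / d) * u + ((f' x - A) / d) * v)
      = (X - a) * u + (b - X) * v := by
    have e1 : ∀ x, ((B - f' x) / d) * u + ((f' x - A) / d) * v
        = (u * B / d - v * A / d) + (v / d - u / d) * f' x := by
      intro x; field_simp; ring
    simp_rw [e1]
    rw [intervalIntegral.integral_add (intervalIntegrable_const) (hintf'.const_mul _),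
      intervalIntegral.integral_const, intervalIntegral.integral_const_mul, hftc, hrel]
    field_simp
    have hdi : d * d⁻¹ = 1 := mul_inv_cancel₀ hd0.ne'
    linear_combination (u*B*b - u*B*a - v*A*b + v*A*a) * hdi - (u*(X-a)+v*(b-X)) * hd
  rw [hcalc] at hle
  -- rewrite RHS of goal
  have hYa : Y - f a = A * (X - a) := by rw [hY1]; ring
  have hbY : f b - Y = B * (b - X) := by rw [hY2]; ring
  have hr1 : Real.sqrt ((X - a) ^ 2 + (Y - f a) ^ 2) = (X - a) * u := by
    rw [hYa, show (X - a) ^ 2 + (A * (X - a)) ^ 2 = (X - a) ^ 2 * (1 + A ^ 2) by ring,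
      Real.sqrt_mul (sq_nonneg _), Real.sqrt_sq (by linarith)]
  have hr2 : Real.sqrt ((b - X) ^ 2 + (f b - Y) ^ 2) = (b - X) * v := by
    rw [hbY, show (b - X) ^ 2 + (B * (b - X)) ^ 2 = (b - X) ^ 2 * (1 + B ^ 2) by ring,
      Real.sqrt_mul (sq_nonneg _), Real.sqrt_sq (by linarith)]
  rw [hr1, hr2]
  exact hle
end
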